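/- Let n ≥ 1, ω = e^{iπ/n}, f : ℕ → ℝ, and for each ℓ let ζ_ℓ ∈ ℂ be a square root of m_f(ω^ℓ) where m_f(x) = ∑_{k=0}^{n-1} f(k) x^k. Define b_f(x) = (1/(2n)) ∑_{ℓ=0}^{2n-1} ζ_ℓ x^ℓ and a_f(x) = (1/(2n)) ∑_{ℓ=0}^{2n-1} ζ_ℓ² x^ℓ. Then for every x ∈ ℂ, ∑_{k=0}^{2n-1} b_f(ω^k) · b_f(ω^{-k} x) = a_f(x). -/

import Mathlib

open Complex Finset

theorem stmt_3 (n : ℕ) (hn : 1 ≤ n) (ω : ℂ)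
    (hω : ω = Complex.exp (Real.pi * Complex.I / n))
    (f : ℕ → ℝ) (ζ : ℕ → ℂ)
    (hζ : ∀ ℓ < 2 * n, (ζ ℓ) ^ 2 = ∑ k ∈ Finset.range n, (f k : ℂ) * (ω ^ ℓ) ^ k)
    (b_f : ℂ → ℂ)
    (hb : ∀ x : ℂ, b_f x = (1 / (2 * n : ℂ)) * ∑ ℓ ∈ Finset.range (2 * n), ζ ℓ * x ^ ℓ)
    (a_f : ℂ → ℂ)
    (ha : ∀ x : ℂ, a_f x = (1 / (2 * n : ℂ)) * ∑ ℓ ∈ Finset.range (2 * n), (ζ ℓ) ^ 2 * x ^ ℓ)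
    (x : ℂ) :
    ∑ k ∈ Finset.range (2 * n), b_f (ω ^ k) * b_f (ω ^ (-(k : ℤ)) * x) = a_f x := by
  have hn0 : (2 * n : ℕ) ≠ 0 := by omega
  have hNc : ((2 * n : ℕ) : ℂ) ≠ 0 := Nat.cast_ne_zero.mpr hn0
  have hω0 : ω ≠ 0 := by rw [hω]; exact Complex.exp_ne_zero _
  have hprim : IsPrimitiveRoot ω (2 * n) := by
    have h := Complex.isPrimitiveRoot_exp (2 * n) hn0
    convert h using 2
    rw [hω]
    congr 1
    have hnc : (n : ℂ) ≠ 0 := Nat.cast_ne_zero.mpr (by omega)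
    push_cast
    field_simp
  have key : ∀ ℓ ∈ range (2 * n), ∀ m ∈ range (2 * n),
      ∑ k ∈ range (2 * n), (ω ^ ((ℓ : ℤ) - m)) ^ k
        = if m = ℓ then ((2 * n : ℕ) : ℂ) else 0 := by
    intro ℓ hℓ m hm
    simp only [mem_range] at hℓ hm
    by_cases h : m = ℓ
    · subst h
      simp
    · rw [if_neg h]
      have hz1 : ω ^ ((ℓ : ℤ) - m) ≠ 1 := by
        intro h1
        rw [hprim.zpow_eq_one_iff_dvd] at h1
        revert h1; intro hd
        have hne : ((ℓ : ℤ) - m) ≠ 0 := by omega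
        have h3 : ((2 * n : ℕ) : ℤ) ≤ |(ℓ : ℤ) - m| :=
          Int.le_of_dvd (abs_pos.mpr hne) ((dvd_abs _ _).mpr hd)
        rcases abs_cases ((ℓ : ℤ) - m) with ⟨he, _⟩ | ⟨he, _⟩ <;> omega
      have hzN : (ω ^ ((ℓ : ℤ) - m)) ^ (2 * n) = 1 := by
        rw [← zpow_natCast, ← zpow_mul, mul_comm, zpow_mul, zpow_natCast,
          hprim.pow_eq_one, one_zpow]
      rw [geom_sum_eq hz1, hzN, sub_self, zero_div]
  calc ∑ k ∈ range (2 * n), b_f (ω ^ k) * b_f (ω ^ (-(k : ℤ)) * x)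
      = ∑ k ∈ range (2 * n), ∑ ℓ ∈ range (2 * n), ∑ m ∈ range (2 * n),
          (1 / (2 * n : ℂ)) * (1 / (2 * n : ℂ)) * (ζ ℓ * ζ m * x ^ m)
            * (ω ^ ((ℓ : ℤ) - m)) ^ k := by
        refine Finset.sum_congr rfl fun k _ => ?_
        rw [hb, hb, mul_mul_mul_comm, Finset.sum_mul_sum]
        rw [Finset.mul_sum]
        refine Finset.sum_congr rfl fun ℓ _ => ?_
        rw [Finset.mul_sum]
        refine Finset.sum_congr rfl fun m _ => ?_
        have : (ω ^ ((ℓ : ℤ) - m)) ^ k = (ω ^ k) ^ ℓ * (ω ^ (-(m : ℤ))) ^ k := by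
          rw [← zpow_natCast (ω ^ ((ℓ:ℤ) - m)) k, ← zpow_mul,
            ← zpow_natCast (ω ^ k) ℓ, ← zpow_natCast ω k, ← zpow_mul,
            ← zpow_natCast (ω ^ (-(m:ℤ))) k, ← zpow_mul, ← zpow_add₀ hω0]
          ring_nf
        have h2 : (ω ^ (-(k : ℤ))) ^ m = (ω ^ (-(m : ℤ))) ^ k := by
          rw [← zpow_natCast (ω ^ (-(k:ℤ))) m, ← zpow_mul,
            ← zpow_natCast (ω ^ (-(m:ℤ))) k, ← zpow_mul]
          ring_nf
        rw [mul_pow, this, h2]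
        ring
    _ = ∑ ℓ ∈ range (2 * n), ∑ m ∈ range (2 * n),
          (1 / (2 * n : ℂ)) * (1 / (2 * n : ℂ)) * (ζ ℓ * ζ m * x ^ m)
            * ∑ k ∈ range (2 * n), (ω ^ ((ℓ : ℤ) - m)) ^ k := by
        rw [Finset.sum_comm]
        refine Finset.sum_congr rfl fun ℓ _ => ?_
        rw [Finset.sum_comm]
        refine Finset.sum_congr rfl fun m _ => ?_
        rw [Finset.mul_sum]
    _ = a_f x := by
        rw [ha]
        rw [Finset.mul_sum]
        refine Finset.sum_congr rfl fun ℓ hℓ => ?_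
        rw [Finset.sum_eq_single ℓ]
        · rw [key ℓ hℓ ℓ hℓ, if_pos rfl, sq]
          have hnc : (n : ℂ) ≠ 0 := Nat.cast_ne_zero.mpr (by omega)
          push_cast
          field_simp
        · intro m hm hne
          rw [key ℓ hℓ m hm, if_neg hne, mul_zero]
        · intro h; exact absurd hℓ h
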